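/- arXiv:1610.05268 — 5 statements merged into one kernel-verified Lean document; each statement's English description precedes it below -/
import Mathlib

section
/- Let E be a topological graph with no singular vertices. Then the following are equivalent: (1) E is topologically free; (2) B^n = ∅ for all n ≥ 1; (3) V_n = ∅ for all n ≥ 1; (4) Γ(E^∞,σ) is essentially free. -/
/-- A topological graph: vertex space `V`, edge space `E`, continuous range map `r`
and locally homeomorphic source map `s`. -/
structure TopGraph (V E : Type) [TopologicalSpace V] [TopologicalSpace E] where
  r : E → V
  s : E → V
  r_cont : Continuous r
  s_locHomeo : IsLocalHomeomorph s

namespace TopGraph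

variable {V E : Type} [TopologicalSpace V] [TopologicalSpace E] (G : TopGraph V E)

/-- The predicate that `μ : Fin n → E` is a (finite) path. -/
def IsPathFn {n : ℕ} (μ : Fin n → E) : Prop :=
  ∀ (i : ℕ) (h : i + 1 < n), G.s (μ ⟨i, Nat.lt_of_succ_lt h⟩) = G.r (μ ⟨i + 1, h⟩)

/-- The space `E^n` of paths of length `n`, with the subspace topology of the product. -/
def Path (n : ℕ) : Type := {μ : Fin n → E // G.IsPathFn μ}

instance (n : ℕ) : TopologicalSpace (G.Path n) :=
  inferInstanceAs (TopologicalSpace {μ : Fin n → E // G.IsPathFn μ})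

/-- `r^n(μ) = r(μ₁)`. -/
def pathRange {n : ℕ} (hn : 0 < n) (μ : G.Path n) : V := G.r (μ.1 ⟨0, hn⟩)

/-- `s^n(μ) = s(μₙ)`. -/
def pathSource {n : ℕ} (hn : 0 < n) (μ : G.Path n) : V :=
  G.s (μ.1 ⟨n - 1, Nat.sub_lt hn Nat.one_pos⟩)

/-- A cycle is a path whose range equals its source; its base point is its range. -/
def IsCycle {n : ℕ} (hn : 0 < n) (μ : G.Path n) : Prop :=
  G.pathRange hn μ = G.pathSource hn μ

/-- A path `μ ∈ E^n` has an entrance if some edge `e ≠ μᵢ` has `r(e) = r(μᵢ)`. -/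
def HasEntrance {n : ℕ} (μ : G.Path n) : Prop :=
  ∃ (i : Fin n) (e : E), G.r e = G.r (μ.1 i) ∧ e ≠ μ.1 i

theorem block_lt {n k : ℕ} (j : Fin k) (i : Fin n) : (j : ℕ) * n + (i : ℕ) < k * n := by
  have hi := i.2
  have hj := j.2
  calc (j : ℕ) * n + (i : ℕ) < ((j : ℕ) + 1) * n := by rw [Nat.add_mul, Nat.one_mul]; omega
    _ ≤ k * n := Nat.mul_le_mul (Nat.succ_le_of_lt hj) le_rfl

/-- The `j`-th block of length `n` of a path of length `k * n`. -/
def block {n k : ℕ} (α : G.Path (k * n)) (j : Fin k) : G.Path n :=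
  ⟨fun i => α.1 ⟨(j : ℕ) * n + (i : ℕ), block_lt j i⟩,
    fun i h => α.2 ((j : ℕ) * n + i) (block_lt j ⟨i + 1, h⟩)⟩

/-- `α ∈ kN` : every block of `α` lies in `N`. -/
def BlocksIn {n k : ℕ} (N : Set (G.Path n)) (α : G.Path (k * n)) : Prop :=
  ∀ j : Fin k, G.block α j ∈ N

/-- The set `B^n` of cycles of length `n` admitting `k ≥ 1` and an open neighbourhood `N`
satisfying conditions (1) and (2) of Notation 3.3. -/
def B (n : ℕ) (hn : 0 < n) : Set (G.Path n) :=
  {μ | G.IsCycle hn μ ∧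
    ∃ (k : ℕ) (hk : 0 < k) (N : Set (G.Path n)), IsOpen N ∧ μ ∈ N ∧
      (∀ α β : G.Path (k * n), G.BlocksIn N α → G.BlocksIn N β → α ≠ β →
        ¬ ∃ γ ∈ N, G.pathRange hn γ = G.pathSource (Nat.mul_pos hk hn) α ∧
          G.pathSource hn γ = G.pathSource (Nat.mul_pos hk hn) β) ∧
      (∀ α : G.Path (k * n), G.BlocksIn N α →
        ¬ ∃ γ ∈ N, G.IsCycle hn γ ∧ G.HasEntrance γ ∧
          G.pathRange hn γ = G.pathSource (Nat.mul_pos hk hn) α)}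

/-- The infinite path space `E^∞`, with the subspace topology of the product. -/
def InfPath : Type := {x : ℕ → E // ∀ i : ℕ, G.s (x i) = G.r (x (i + 1))}

instance : TopologicalSpace G.InfPath :=
  inferInstanceAs (TopologicalSpace {x : ℕ → E // ∀ i : ℕ, G.s (x i) = G.r (x (i + 1))})

/-- The one-sided shift on `E^∞`. -/
def shift (x : G.InfPath) : G.InfPath := ⟨fun i => x.1 (i + 1), fun i => x.2 (i + 1)⟩

/-- The segment `x_{a+1} ⋯ x_{a+len}` (0-indexed: edges `a, …, a+len-1`) of an infinite path. -/
def segment (x : G.InfPath) (a len : ℕ) : G.Path len :=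
  ⟨fun i => x.1 (a + (i : ℕ)), fun i _ => x.2 (a + i)⟩

/-- The boundary path groupoid `Γ(E^∞, σ)` as a set. -/
def Gamma : Type :=
  {g : G.InfPath × ℤ × G.InfPath //
    ∃ k l : ℕ, g.2.1 = (k : ℤ) - (l : ℤ) ∧ G.shift^[k] g.1 = G.shift^[l] g.2.2}

/-- Basic sets `U(U, W, k, l)` for the topology of `Γ(E^∞, σ)`. -/
def basicSet (U W : Set G.InfPath) (k l : ℕ) : Set G.Gamma :=
  {g | g.1.1 ∈ U ∧ g.1.2.2 ∈ W ∧ g.1.2.1 = (k : ℤ) - (l : ℤ) ∧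
    G.shift^[k] g.1.1 = G.shift^[l] g.1.2.2}

/-- The topology on `Γ(E^∞, σ)` generated by the sets `U(U, W, k, l)` with `U, W` open
and `σ^k`, `σ^l` injective on `U` resp. `W`. -/
instance : TopologicalSpace G.Gamma :=
  TopologicalSpace.generateFrom
    {S | ∃ (U W : Set G.InfPath) (k l : ℕ), IsOpen U ∧ IsOpen W ∧
      Set.InjOn (G.shift^[k]) U ∧ Set.InjOn (G.shift^[l]) W ∧ S = G.basicSet U W k l}

/-- The isotropy group bundle `Iso(Γ(E^∞, σ))`. -/
def isoSet : Set G.Gamma := {g | g.1.1 = g.1.2.2}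

/-- The interior of the isotropy group bundle. -/
def isoInterior : Set G.Gamma := interior G.isoSet

/-- The set `E^0_fin` of finite receivers. -/
def finRecv : Set V := {v | ∃ N : Set V, IsOpen N ∧ v ∈ N ∧ IsCompact (G.r ⁻¹' closure N)}

/-- The set `E^0_sce` of sources. -/
def sce : Set V := (closure (Set.range G.r))ᶜ

/-- The set `E^0_rg` of regular vertices. -/
def rg : Set V := G.finRecv \ closure G.sce

/-- The set `E^0_sg` of singular vertices. -/
def sg : Set V := G.rgᶜ

/-- The set `V_n` of vertices having an open neighbourhood consisting of base points of
cycles without entrances in `E^n`. -/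
def Vset (n : ℕ) (hn : 0 < n) : Set V :=
  {v | ∃ W : Set V, IsOpen W ∧ v ∈ W ∧
    ∀ w ∈ W, ∃ γ : G.Path n, G.IsCycle hn γ ∧ ¬ G.HasEntrance γ ∧ G.pathRange hn γ = w}

/-- `E` is topologically free if the set of base points of cycles without entrances has
empty interior. -/
def TopologicallyFree : Prop :=
  interior {v : V | ∃ (n : ℕ) (hn : 0 < n) (γ : G.Path n),
    G.IsCycle hn γ ∧ ¬ G.HasEntrance γ ∧ G.pathRange hn γ = v} = ∅

/-- The groupoid `Γ(E^∞, σ)` is essentially free if the set of units with trivial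
isotropy is dense. -/
def EssentiallyFree : Prop :=
  Dense {x : G.InfPath | ∀ g : G.Gamma, g.1.1 = x → g.1.2.2 = x → g.1.2.1 = 0}

end TopGraph

/-!
An infinite path that reaches the base point of a cycle without entrances has to wind around
that cycle forever, so it is eventually periodic and has nontrivial isotropy. This gives
`(4) ⇒ (1)`, and `(4) ⇒ (2)` because conditions (1) and (2) of `B^n` force every infinite path
whose first `k + 1` blocks lie in `N` to reach such a cycle after `k` blocks. A vertex of `V_n`
is the base of a cycle in `B^n` (take `k = 1` and `N = (r^n)⁻¹ W`), and `V_n` lies in the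
interior of the set of base points, which gives `(2) ⇒ (3)` and `(1) ⇒ (3)`.

For `(3) ⇒ (4)`: if the paths with trivial isotropy are not dense, the Baire category theorem on
the Polish space `E^∞` yields a nonempty open set of paths `y` with `σ^(a+n) y = σ^a y`, and
we may shrink it to a cylinder fixing the first `m` edges up to neighbourhoods. Since `s` is
open and, without singular vertices, every vertex receives an edge, every vertex `w` near
`r(x_{a+m+1})` is the range of the `(a+m+1)`-st edge of a path in this cylinder. The segment of
length `n` there is a cycle at `w`, and it has no entrance: diverting the path into an entrance
one period later and continuing arbitrarily stays in the cylinder but breaks the periodicity.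
-/

open Topology Filter

theorem OnePoint.secondCountableTopology (X : Type*) [TopologicalSpace X] [T2Space X]
    [LocallyCompactSpace X] [SecondCountableTopology X] :
    SecondCountableTopology (OnePoint X) := by
  obtain ⟨B, hBc, -, hB⟩ := TopologicalSpace.exists_countable_basis X
  let K : CompactExhaustion X := CompactExhaustion.choice X
  refine TopologicalSpace.IsTopologicalBasis.secondCountableTopology
    (b := ((fun U => (OnePoint.some '' U : Set (OnePoint X))) '' B) ∪
      Set.range fun n => (OnePoint.some '' K n : Set (OnePoint X))ᶜ)
    (TopologicalSpace.isTopologicalBasis_of_isOpen_of_nhds ?_ ?_)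
    ((hBc.image _).union (Set.countable_range _))
  · rintro s (⟨U, hU, rfl⟩ | ⟨n, rfl⟩)
    · exact OnePoint.isOpenEmbedding_coe.isOpenMap _ (hB.isOpen hU)
    · exact ((K.isCompact n).image OnePoint.continuous_coe).isClosed.isOpen_compl
  · rintro (_ | x) s hx hs
    · obtain ⟨n, hn⟩ := K.exists_superset_of_isCompact ((OnePoint.isOpen_iff_of_mem hx).1 hs).2
      refine ⟨(OnePoint.some '' K n)ᶜ, Or.inr ⟨n, rfl⟩, ?_, ?_⟩
      · rintro ⟨z, -, h⟩
        exact OnePoint.coe_ne_infty z h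
      · rintro (_ | y) hy
        · exact hx
        · exact not_not.1 fun hys => hy ⟨y, hn hys, rfl⟩
    · obtain ⟨U, hU, hxU, hUs⟩ := hB.mem_nhds_iff.1
        (OnePoint.continuous_coe.continuousAt.preimage_mem_nhds (hs.mem_nhds hx))
      exact ⟨OnePoint.some '' U, Or.inl ⟨U, hU, rfl⟩, ⟨x, hxU, rfl⟩, Set.image_subset_iff.2 hUs⟩

/-- A locally compact space is open in its one-point compactification, which is compact and
metrizable. -/
theorem PolishSpace.of_locallyCompactSpace (X : Type*) [TopologicalSpace X] [T2Space X]
    [LocallyCompactSpace X] [SecondCountableTopology X] : PolishSpace X := by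
  have := OnePoint.secondCountableTopology X
  let := TopologicalSpace.metrizableSpaceMetric (OnePoint X)
  have : PolishSpace (Set.range (OnePoint.some : X → OnePoint X)) :=
    OnePoint.isOpenEmbedding_coe.isOpen_range.polishSpace
  exact OnePoint.isOpenEmbedding_coe.isEmbedding.toHomeomorph.isClosedEmbedding.polishSpace

theorem exists_nonempty_isOpen_subset_of_subset_iUnion {X ι : Type*} [TopologicalSpace X]
    [BaireSpace X] [Countable ι] {O : Set X} (hO : IsOpen O) (hne : O.Nonempty)
    {C : ι → Set X} (hC : ∀ i, IsClosed (C i)) (hcover : O ⊆ ⋃ i, C i) :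
    ∃ i, ∃ P : Set X, IsOpen P ∧ P.Nonempty ∧ P ⊆ C i := by
  obtain ⟨i₀, -⟩ := Set.mem_iUnion.1 (hcover hne.some_mem)
  have hcover' : ⋃ i, (C i ∪ Oᶜ) = Set.univ := Set.eq_univ_of_forall fun x => by
    by_cases hx : x ∈ O
    · obtain ⟨i, hi⟩ := Set.mem_iUnion.1 (hcover hx)
      exact Set.mem_iUnion.2 ⟨i, Or.inl hi⟩
    · exact Set.mem_iUnion.2 ⟨i₀, Or.inr hx⟩
  obtain ⟨x, hxO, hx⟩ := (dense_iUnion_interior_of_closed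
    (fun i => (hC i).union hO.isClosed_compl) hcover').inter_open_nonempty O hO hne
  obtain ⟨i, hi⟩ := Set.mem_iUnion.1 hx
  exact ⟨i, interior (C i ∪ Oᶜ) ∩ O, isOpen_interior.inter hO, ⟨x, hi, hxO⟩,
    fun y ⟨hy, hyO⟩ => (interior_subset hy).resolve_right (not_not.2 hyO)⟩

namespace TopGraph

variable {V E : Type} [TopologicalSpace V] [TopologicalSpace E] (G : TopGraph V E)

theorem mem_range_r_of_mem_rg [T2Space V] {v : V} (hv : v ∈ G.rg) : v ∈ Set.range G.r := by
  obtain ⟨⟨N, hNo, hvN, hK⟩, hv_sce⟩ := hv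
  have hv_cl : v ∈ closure (Set.range G.r) := not_not.1 fun h => hv_sce (subset_closure h)
  have hsub : N ∩ Set.range G.r ⊆ G.r '' (G.r ⁻¹' closure N) := by
    rintro _ ⟨hN, e, rfl⟩
    exact ⟨e, subset_closure hN, rfl⟩
  obtain ⟨e, -, he⟩ := (hK.image G.r_cont).isClosed.closure_subset
    (closure_mono hsub (hNo.inter_closure ⟨hvN, hv_cl⟩))
  exact ⟨e, he⟩

theorem r_surjective [T2Space V] (hsg : G.sg = ∅) : Function.Surjective G.r := fun v =>
  G.mem_range_r_of_mem_rg (Set.compl_empty_iff.1 hsg ▸ Set.mem_univ v)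

theorem exists_infPath_extending (hr : Function.Surjective G.r) (f : ℕ → E) (p : ℕ)
    (hf : ∀ i < p, G.s (f i) = G.r (f (i + 1))) : ∃ y : G.InfPath, ∀ i ≤ p, y.1 i = f i := by
  obtain ⟨g, hg⟩ := hr.hasRightInverse
  let step : E → E := fun e => g (G.s e)
  let y : ℕ → E := fun i => if i ≤ p then f i else step^[i - p] (f p)
  have hy_tail : ∀ i, p ≤ i → y i = step^[i - p] (f p) := by
    intro i hi
    rcases hi.eq_or_lt with rfl | hi
    · simp [y]
    · simp [y, hi.not_ge]
  refine ⟨⟨y, fun i => ?_⟩, fun i hi => if_pos hi⟩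
  rcases lt_or_ge i p with hi | hi
  · simp only [y, if_pos hi.le, if_pos (Nat.succ_le_of_lt hi)]
    exact hf i hi
  · rw [hy_tail i hi, hy_tail (i + 1) (by omega), show i + 1 - p = i - p + 1 by omega,
      Function.iterate_succ_apply']
    exact (hg _).symm

section Cycles

variable {G} {n : ℕ} (hn : 0 < n) (γ : G.Path n)

/-- The periodic extension `γ₁ γ₂ ⋯ γₙ γ₁ γ₂ ⋯` of a path `γ`, indexed from `0`. -/
def periodic (i : ℕ) : E := γ.1 ⟨i % n, Nat.mod_lt _ hn⟩

theorem periodic_add_self (i : ℕ) : periodic hn γ (i + n) = periodic hn γ i := by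
  simp [periodic]

theorem periodic_mul_add {j i : ℕ} (hi : i < n) : periodic hn γ (j * n + i) = γ.1 ⟨i, hi⟩ := by
  simp [periodic, Nat.mod_eq_of_lt hi]

theorem r_periodic_zero : G.r (periodic hn γ 0) = G.pathRange hn γ := by
  simp [periodic, pathRange]

variable {hn γ}

theorem IsCycle.s_periodic (hc : G.IsCycle hn γ) (i : ℕ) :
    G.s (periodic hn γ i) = G.r (periodic hn γ (i + 1)) := by
  have hmod : (i + 1) % n = (i % n + 1) % n := (Nat.mod_add_mod i n 1).symm
  have hlt := Nat.mod_lt i hn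
  by_cases h : i % n + 1 < n
  · rw [periodic, γ.2 (i % n) h]
    exact congrArg (G.r ∘ γ.1) (Fin.ext (hmod.trans (Nat.mod_eq_of_lt h)).symm)
  · have hlast : i % n + 1 = n := by omega
    have hs : G.s (periodic hn γ i) = G.pathSource hn γ :=
      congrArg (G.s ∘ γ.1) (Fin.ext (by simp only; omega))
    rw [hs, ← hc, ← r_periodic_zero hn γ]
    exact congrArg (G.r ∘ γ.1) (Fin.ext (by simp [hmod, hlast]))

def IsCycle.infPath (hc : G.IsCycle hn γ) : G.InfPath := ⟨periodic hn γ, hc.s_periodic⟩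

variable (hc : G.IsCycle hn γ) (hent : ¬ G.HasEntrance γ)
include hc hent

omit hc in
theorem eq_periodic_of_r_eq {e : E} {i : ℕ} (h : G.r e = G.r (periodic hn γ i)) :
    e = periodic hn γ i :=
  not_not.1 fun hne => hent ⟨_, e, h, hne⟩

theorem eq_periodic_of_pathRange_eq {m : ℕ} (hm : 0 < m) (α : G.Path m)
    (hα : G.pathRange hm α = G.pathRange hn γ) :
    ∀ i (hi : i < m), α.1 ⟨i, hi⟩ = periodic hn γ i
  | 0, _ => eq_periodic_of_r_eq hent (hα.trans (r_periodic_zero hn γ).symm)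
  | i + 1, hi => eq_periodic_of_r_eq hent (by
      rw [← α.2 i hi, eq_periodic_of_pathRange_eq hm α hα i (by omega), hc.s_periodic])

theorem eq_of_pathRange_eq {m : ℕ} (hm : 0 < m) {α β : G.Path m}
    (hα : G.pathRange hm α = G.pathRange hn γ) (hβ : G.pathRange hm β = G.pathRange hn γ) :
    α = β :=
  Subtype.ext <| funext fun i =>
    (eq_periodic_of_pathRange_eq hc hent hm α hα i i.2).trans
      (eq_periodic_of_pathRange_eq hc hent hm β hβ i i.2).symm

theorem pathSource_eq_of_dvd {m : ℕ} (hm : 0 < m) (hdvd : n ∣ m) (α : G.Path m)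
    (hα : G.pathRange hm α = G.pathRange hn γ) : G.pathSource hm α = G.pathRange hn γ := by
  obtain ⟨c, rfl⟩ := hdvd
  obtain ⟨c, rfl⟩ : ∃ c', c = c' + 1 := ⟨c - 1, by have := Nat.pos_of_mul_pos_left hm; omega⟩
  have hidx : n * (c + 1) - 1 = c * n + (n - 1) := by rw [Nat.mul_succ, Nat.mul_comm]; omega
  rw [pathSource, eq_periodic_of_pathRange_eq hc hent hm α hα, hidx,
    periodic_mul_add hn γ (Nat.sub_lt hn one_pos), hc]
  rfl

theorem coord_add_eq_periodic {x : G.InfPath} {a : ℕ}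
    (hx : G.r (x.1 a) = G.pathRange hn γ) (i : ℕ) : x.1 (a + i) = periodic hn γ i :=
  eq_periodic_of_pathRange_eq hc hent (Nat.succ_pos i) (G.segment x a (i + 1)) hx i i.lt_succ_self

end Cycles

theorem shift_iterate_apply (x : G.InfPath) (k i : ℕ) : (G.shift^[k] x).1 i = x.1 (i + k) := by
  induction k generalizing x with
  | zero => rfl
  | succ k ih => rw [Function.iterate_succ_apply, ih]; rfl

theorem shift_iterate_eq_iff {x y : G.InfPath} {k l : ℕ} :
    G.shift^[k] x = G.shift^[l] y ↔ ∀ i, x.1 (i + k) = y.1 (i + l) := by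
  refine ⟨fun h i => ?_, fun h => Subtype.ext (funext fun i => ?_)⟩
  · rw [← shift_iterate_apply, h, shift_iterate_apply]
  · rw [shift_iterate_apply, shift_iterate_apply, h]

theorem shift_iterate_add_eq_of_r_eq {n : ℕ} {hn : 0 < n} {γ : G.Path n}
    (hc : G.IsCycle hn γ) (hent : ¬ G.HasEntrance γ) {x : G.InfPath} {a : ℕ}
    (hx : G.r (x.1 a) = G.pathRange hn γ) : G.shift^[a + n] x = G.shift^[a] x :=
  G.shift_iterate_eq_iff.2 fun i => by
    rw [show i + (a + n) = a + (i + n) by omega, add_comm i a, coord_add_eq_periodic hc hent hx,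
      coord_add_eq_periodic hc hent hx, periodic_add_self]

theorem coord_add_eq_of_shift_iterate_eq {y : G.InfPath} {a n b : ℕ}
    (h : G.shift^[a + n] y = G.shift^[a] y) (hab : a ≤ b) : y.1 (b + n) = y.1 b := by
  have := G.shift_iterate_eq_iff.1 h (b - a)
  rwa [show b - a + (a + n) = b + n by omega, show b - a + a = b by omega] at this

theorem pathRange_segment (x : G.InfPath) (a : ℕ) {m : ℕ} (hm : 0 < m) :
    G.pathRange hm (G.segment x a m) = G.r (x.1 a) :=
  rfl

theorem pathSource_segment (x : G.InfPath) (a : ℕ) {m : ℕ} (hm : 0 < m) :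
    G.pathSource hm (G.segment x a m) = G.r (x.1 (a + m)) :=
  (x.2 _).trans (congrArg (G.r ∘ x.1) (by simp only; omega))

theorem block_segment (x : G.InfPath) (a : ℕ) {k n : ℕ} (j : Fin k) :
    G.block (G.segment x a (k * n)) j = G.segment x (a + j * n) n :=
  Subtype.ext <| funext fun _ => congrArg x.1 (Nat.add_assoc _ _ _).symm

theorem segment_infPath_mul {n : ℕ} {hn : 0 < n} {γ : G.Path n} (hc : G.IsCycle hn γ)
    (j : ℕ) : G.segment hc.infPath (j * n) n = γ :=
  Subtype.ext <| funext fun i => periodic_mul_add hn γ i.2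

theorem continuous_coord (i : ℕ) : Continuous fun x : G.InfPath => x.1 i :=
  (continuous_apply i).comp continuous_subtype_val

theorem continuous_segment (a m : ℕ) : Continuous fun x : G.InfPath => G.segment x a m :=
  (continuous_pi fun _ => G.continuous_coord _).subtype_mk _

theorem continuous_shift : Continuous G.shift :=
  (continuous_pi fun i => G.continuous_coord (i + 1)).subtype_mk _

theorem continuous_pathRange {n : ℕ} (hn : 0 < n) : Continuous (G.pathRange hn) :=
  G.r_cont.comp ((continuous_apply _).comp continuous_subtype_val)

def trivialIsotropy : Set G.InfPath :=
  {x | ∀ g : G.Gamma, g.1.1 = x → g.1.2.2 = x → g.1.2.1 = 0}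

theorem essentiallyFree_iff_dense : G.EssentiallyFree ↔ Dense G.trivialIsotropy :=
  Iff.rfl

theorem mem_trivialIsotropy_iff {x : G.InfPath} :
    x ∈ G.trivialIsotropy ↔ ∀ k l : ℕ, G.shift^[k] x = G.shift^[l] x → k = l := by
  constructor
  · intro hx k l h
    have := hx ⟨(x, k - l, x), k, l, rfl, h⟩ rfl rfl
    simp only at this
    omega
  · intro hx g hgx hgx'
    obtain ⟨k, l, hz, h⟩ := g.2
    rw [hgx, hgx'] at h
    rw [hz, hx k l h, sub_self]

def entranceFreeBasePoints : Set V :=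
  {v : V | ∃ (n : ℕ) (hn : 0 < n) (γ : G.Path n),
    G.IsCycle hn γ ∧ ¬ G.HasEntrance γ ∧ G.pathRange hn γ = v}

theorem topologicallyFree_iff :
    G.TopologicallyFree ↔ interior G.entranceFreeBasePoints = ∅ :=
  Iff.rfl

theorem Vset_subset_interior (n : ℕ) (hn : 0 < n) :
    G.Vset n hn ⊆ interior G.entranceFreeBasePoints := by
  rintro v ⟨W, hWo, hvW, hW⟩
  exact mem_interior.2 ⟨W, fun w hw => ⟨n, hn, hW w hw⟩, hWo, hvW⟩

theorem pathRange_block_zero {k n : ℕ} (hk : 0 < k) (hn : 0 < n) (α : G.Path (k * n)) :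
    G.pathRange hn (G.block α ⟨0, hk⟩) = G.pathRange (Nat.mul_pos hk hn) α :=
  congrArg (G.r ∘ α.1) (Fin.ext (by simp))

theorem Vset_subset_image_B {n : ℕ} (hn : 0 < n) : G.Vset n hn ⊆ G.pathRange hn '' G.B n hn := by
  rintro v ⟨W, hWo, hvW, hW⟩
  obtain ⟨μ, hμc, -, hμv⟩ := hW v hvW
  have h1n : 0 < 1 * n := Nat.mul_pos one_pos hn
  have hsource : ∀ {m} (hm : 0 < m), n ∣ m → ∀ α : G.Path m, G.pathRange hm α ∈ W →
      G.pathSource hm α = G.pathRange hm α := by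
    intro m hm hdvd α hα
    obtain ⟨γ, hc, hent, hγ⟩ := hW _ hα
    rw [pathSource_eq_of_dvd hc hent hm hdvd α hγ.symm, hγ]
  have hblock : ∀ α : G.Path (1 * n), G.BlocksIn (G.pathRange hn ⁻¹' W) α →
      G.pathRange h1n α ∈ W := fun α hα =>
    G.pathRange_block_zero one_pos hn α ▸ hα ⟨0, one_pos⟩
  refine ⟨μ, ⟨hμc, 1, one_pos, G.pathRange hn ⁻¹' W,
    hWo.preimage (G.continuous_pathRange hn), show G.pathRange hn μ ∈ W from hμv ▸ hvW, ?_, ?_⟩, hμv⟩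
  · rintro α β hα hβ hne ⟨γ, hγW, hγα, hγβ⟩
    obtain ⟨δ, hc, hent, hδ⟩ := hW _ (hblock α hα)
    refine hne (eq_of_pathRange_eq hc hent h1n hδ.symm ?_)
    rw [hδ, ← hsource h1n (dvd_mul_left n 1) α (hblock α hα), ← hγα,
      ← hsource hn dvd_rfl γ hγW, hγβ, hsource h1n (dvd_mul_left n 1) β (hblock β hβ)]
  · rintro α - ⟨γ, hγW, -, hγe, -⟩
    obtain ⟨δ, hc, hent, hδ⟩ := hW _ hγW
    exact hent (eq_of_pathRange_eq hc hent hn rfl hδ.symm ▸ hγe)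

theorem shift_iterate_add_eq_of_forall_segment_mem {n k : ℕ} (hn : 0 < n) (hk : 0 < k)
    {N : Set (G.Path n)}
    (h1 : ∀ α β : G.Path (k * n), G.BlocksIn N α → G.BlocksIn N β → α ≠ β →
      ¬ ∃ γ ∈ N, G.pathRange hn γ = G.pathSource (Nat.mul_pos hk hn) α ∧
        G.pathSource hn γ = G.pathSource (Nat.mul_pos hk hn) β)
    (h2 : ∀ α : G.Path (k * n), G.BlocksIn N α →
      ¬ ∃ γ ∈ N, G.IsCycle hn γ ∧ G.HasEntrance γ ∧
        G.pathRange hn γ = G.pathSource (Nat.mul_pos hk hn) α)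
    {x : G.InfPath} (hx : ∀ j ≤ k, G.segment x (j * n) n ∈ N) :
    G.shift^[k * n + n] x = G.shift^[k * n] x := by
  have hα : G.BlocksIn N (G.segment x 0 (k * n)) := fun j => by
    rw [block_segment, zero_add]
    exact hx j j.2.le
  have hβ : G.BlocksIn N (G.segment x n (k * n)) := fun j => by
    rw [block_segment, show n + j * n = (j + 1) * n by ring]
    exact hx (j + 1) j.2
  have hγα : G.pathRange hn (G.segment x (k * n) n) =
      G.pathSource (Nat.mul_pos hk hn) (G.segment x 0 (k * n)) := by
    rw [pathSource_segment, zero_add]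
    rfl
  have hαβ : G.segment x 0 (k * n) = G.segment x n (k * n) :=
    not_not.1 fun hne => h1 _ _ hα hβ hne ⟨_, hx k le_rfl, hγα, by
      rw [pathSource_segment, pathSource_segment, add_comm]⟩
  have hγc : G.IsCycle hn (G.segment x (k * n) n) := by
    rw [IsCycle, hγα, hαβ, pathSource_segment, pathSource_segment, add_comm]
  have hγe : ¬ G.HasEntrance (G.segment x (k * n) n) := fun he =>
    h2 _ hα ⟨_, hx k le_rfl, hγc, he, hγα⟩
  exact G.shift_iterate_add_eq_of_r_eq hγc hγe rfl

theorem not_essentiallyFree_of_mem_B {n : ℕ} (hn : 0 < n) {μ : G.Path n} (hμ : μ ∈ G.B n hn) :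
    ¬ G.EssentiallyFree := by
  obtain ⟨hμc, k, hk, N, hNo, hμN, h1, h2⟩ := hμ
  let O := ⋂ j ∈ Set.Iic k, (fun x => G.segment x (j * n) n) ⁻¹' N
  have hO : IsOpen O :=
    (Set.finite_Iic k).isOpen_biInter fun j _ => hNo.preimage (G.continuous_segment _ _)
  have hμO : hμc.infPath ∈ O :=
    Set.mem_iInter₂.2 fun j _ => by simpa [G.segment_infPath_mul hμc j] using hμN
  intro hd
  obtain ⟨x, hxO, hx⟩ := hd.inter_open_nonempty O hO ⟨_, hμO⟩
  have hper := G.shift_iterate_add_eq_of_forall_segment_mem hn hk h1 h2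
    fun j hj => Set.mem_iInter₂.1 hxO j hj
  have := G.mem_trivialIsotropy_iff.1 hx _ _ hper
  omega

theorem topologicallyFree_of_essentiallyFree (h : G.EssentiallyFree) : G.TopologicallyFree := by
  rw [topologicallyFree_iff, ← Set.not_nonempty_iff_eq_empty]
  rintro ⟨v, hv⟩
  obtain ⟨n, hn, γ, hc, -, rfl⟩ := interior_subset hv
  let O := (fun x : G.InfPath => G.r (x.1 0)) ⁻¹' interior G.entranceFreeBasePoints
  have hO : IsOpen O := isOpen_interior.preimage (G.r_cont.comp (G.continuous_coord 0))
  have hγO : hc.infPath ∈ O := by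
    show G.r (periodic hn γ 0) ∈ interior G.entranceFreeBasePoints
    rwa [r_periodic_zero]
  obtain ⟨x, hxO, hx⟩ := h.inter_open_nonempty O hO ⟨_, hγO⟩
  obtain ⟨m, hm, δ, hδc, hδe, hδx⟩ := interior_subset hxO
  have := G.mem_trivialIsotropy_iff.1 hx _ _
    (G.shift_iterate_add_eq_of_r_eq hδc hδe (a := 0) hδx.symm)
  omega

theorem isClosed_setOf_isInfPath [T2Space V] :
    IsClosed {x : ℕ → E | ∀ i : ℕ, G.s (x i) = G.r (x (i + 1))} := by
  simp only [Set.ofPred_forall]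
  exact isClosed_iInter fun i => isClosed_eq (G.s_locHomeo.continuous.comp (continuous_apply i))
    (G.r_cont.comp (continuous_apply (i + 1)))

instance [T2Space E] : T2Space G.InfPath :=
  inferInstanceAs (T2Space {x : ℕ → E // ∀ i : ℕ, G.s (x i) = G.r (x (i + 1))})

instance [T2Space V] [T2Space E] [LocallyCompactSpace E] [SecondCountableTopology E] :
    PolishSpace G.InfPath :=
  haveI := PolishSpace.of_locallyCompactSpace E
  G.isClosed_setOf_isInfPath.polishSpace

theorem exists_isOpen_shift_iterate_eq [T2Space V] [T2Space E] [LocallyCompactSpace E]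
    [SecondCountableTopology E] (h : ¬ G.EssentiallyFree) :
    ∃ a n : ℕ, 0 < n ∧ ∃ P : Set G.InfPath, IsOpen P ∧ P.Nonempty ∧
      ∀ y ∈ P, G.shift^[a + n] y = G.shift^[a] y := by
  obtain ⟨x, hx⟩ := not_forall.1 ((G.essentiallyFree_iff_dense).not.1 h)
  let C : ℕ × ℕ → Set G.InfPath := fun p => {y | G.shift^[p.1 + (p.2 + 1)] y = G.shift^[p.1] y}
  have hC : ∀ p, IsClosed (C p) := fun p =>
    isClosed_eq (G.continuous_shift.iterate _) (G.continuous_shift.iterate _)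
  have hcover : (closure G.trivialIsotropy)ᶜ ⊆ ⋃ p, C p := by
    intro y hy
    obtain ⟨k, l, hkl, hne⟩ : ∃ k l : ℕ, G.shift^[k] y = G.shift^[l] y ∧ k ≠ l := by
      simpa [G.mem_trivialIsotropy_iff] using fun h => hy (subset_closure h)
    rcases Nat.lt_or_gt_of_ne hne with hlt | hlt
    · exact Set.mem_iUnion.2 ⟨(k, l - k - 1), by
        simpa [C, show k + (l - k - 1 + 1) = l by omega] using hkl.symm⟩
    · exact Set.mem_iUnion.2 ⟨(l, k - l - 1), by
        simpa [C, show l + (k - l - 1 + 1) = k by omega] using hkl⟩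
  obtain ⟨⟨a, p⟩, P, hPo, hPne, hPC⟩ := exists_nonempty_isOpen_subset_of_subset_iUnion
    isClosed_closure.isOpen_compl ⟨x, hx⟩ hC hcover
  exact ⟨a, p + 1, p.succ_pos, P, hPo, hPne, hPC⟩

theorem exists_cylinder_subset {x : G.InfPath} {P : Set G.InfPath} (hP : P ∈ 𝓝 x) :
    ∃ m, ∃ t : ℕ → Set E, (∀ i, t i ∈ 𝓝 (x.1 i)) ∧
      ∀ y : G.InfPath, (∀ i < m, y.1 i ∈ t i) → y ∈ P := by
  obtain ⟨P', hP', hsub⟩ := Filter.mem_comap.1 (nhds_induced Subtype.val x ▸ hP)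
  rw [nhds_pi, Filter.mem_pi'] at hP'
  obtain ⟨I, t, ht, hIt⟩ := hP'
  exact ⟨I.sup id + 1, t, ht, fun y hy => hsub (hIt fun i hi =>
    hy i (Nat.lt_succ_of_le (I.le_sup (f := id) hi)))⟩

theorem eventually_exists_path_near (x : G.InfPath) {t : ℕ → Set E}
    (ht : ∀ i, t i ∈ 𝓝 (x.1 i)) :
    ∀ q, ∀ᶠ w in 𝓝 (G.s (x.1 q)), ∃ f : ℕ → E, (∀ i ≤ q, f i ∈ t i) ∧
      (∀ i < q, G.s (f i) = G.r (f (i + 1))) ∧ G.s (f q) = w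
  | 0 => by
    filter_upwards [G.s_locHomeo.isOpenMap.image_mem_nhds (ht 0)]
    rintro _ ⟨e, he, rfl⟩
    exact ⟨fun _ => e, fun i hi => by rwa [Nat.le_zero.1 hi], fun i hi => absurd hi i.not_lt_zero,
      rfl⟩
  | q + 1 => by
    have hq := eventually_exists_path_near x ht q
    rw [x.2 q] at hq
    filter_upwards [G.s_locHomeo.isOpenMap.image_mem_nhds
      (inter_mem (ht (q + 1)) (G.r_cont.continuousAt.preimage_mem_nhds hq))]
    rintro _ ⟨e, ⟨he, f, hft, hfp, hfe⟩, rfl⟩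
    refine ⟨Function.update f (q + 1) e, fun i hi => ?_, fun i hi => ?_, by simp⟩
    · rcases hi.eq_or_lt with rfl | hi
      · simpa using he
      · rw [Function.update_of_ne hi.ne]
        exact hft i (by omega)
    · rcases (Nat.lt_succ_iff.1 hi).eq_or_lt with rfl | hi
      · simpa using hfe
      · rw [Function.update_of_ne (by omega), Function.update_of_ne (by omega)]
        exact hfp i hi

theorem eventually_exists_infPath_near (hr : Function.Surjective G.r) (x : G.InfPath)
    {t : ℕ → Set E} (ht : ∀ i, t i ∈ 𝓝 (x.1 i)) (q : ℕ) :
    ∀ᶠ w in 𝓝 (G.r (x.1 (q + 1))), ∃ y : G.InfPath, (∀ i ≤ q, y.1 i ∈ t i) ∧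
      G.r (y.1 (q + 1)) = w := by
  rw [← x.2 q]
  filter_upwards [G.eventually_exists_path_near x ht q]
  rintro w ⟨f, hft, hfp, rfl⟩
  obtain ⟨y, hy⟩ := G.exists_infPath_extending hr f q hfp
  exact ⟨y, fun i hi => (hy i hi).symm ▸ hft i hi, by rw [← y.2 q, hy q le_rfl]⟩

theorem isCycle_segment_of_shift_iterate_eq {y : G.InfPath} {a n b : ℕ} (hn : 0 < n)
    (h : G.shift^[a + n] y = G.shift^[a] y) (hab : a ≤ b) : G.IsCycle hn (G.segment y b n) := by
  rw [IsCycle, pathRange_segment, pathSource_segment, G.coord_add_eq_of_shift_iterate_eq h hab]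

theorem not_hasEntrance_segment (hr : Function.Surjective G.r) {a m n b : ℕ} {t : ℕ → Set E}
    (hper : ∀ y : G.InfPath, (∀ i < m, y.1 i ∈ t i) → G.shift^[a + n] y = G.shift^[a] y)
    {y : G.InfPath} (hy : ∀ i < m, y.1 i ∈ t i) (hab : a ≤ b) (hmb : m ≤ b) :
    ¬ G.HasEntrance (G.segment y b n) := by
  rintro ⟨i, e, hre, hne⟩
  have hyp : y.1 (b + i + n) = y.1 (b + i) :=
    G.coord_add_eq_of_shift_iterate_eq (hper y hy) (by omega)
  obtain ⟨y', hy'⟩ := G.exists_infPath_extending hr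
    (fun j => if j < b + i + n then y.1 j else e) (b + i + n) fun j hj => by
      rcases (show j + 1 ≤ b + i + n by omega).eq_or_lt with hj' | hj'
      · rw [if_pos hj, if_neg (by omega), y.2 j, hj', hyp]
        exact hre.symm
      · rw [if_pos hj, if_pos hj']
        exact y.2 j
  have hy't : ∀ j < m, y'.1 j ∈ t j := fun j hj => by
    rw [hy' j (by omega), if_pos (by omega)]
    exact hy j hj
  have := G.coord_add_eq_of_shift_iterate_eq (hper y' hy't) (show a ≤ b + i by omega)
  rw [hy' _ le_rfl, hy' _ (by omega), if_neg (lt_irrefl _), if_pos (by omega)] at this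
  exact hne this

theorem exists_Vset_nonempty_of_not_essentiallyFree [T2Space V] [T2Space E]
    [LocallyCompactSpace E] [SecondCountableTopology E] (hr : Function.Surjective G.r)
    (h : ¬ G.EssentiallyFree) : ∃ n, ∃ hn : 0 < n, (G.Vset n hn).Nonempty := by
  obtain ⟨a, n, hn, P, hPo, ⟨x, hx⟩, hper⟩ := G.exists_isOpen_shift_iterate_eq h
  obtain ⟨m, t, ht, hmP⟩ := G.exists_cylinder_subset (hPo.mem_nhds hx)
  obtain ⟨W, hWsub, hWo, hxW⟩ := mem_nhds_iff.1 (G.eventually_exists_infPath_near hr x ht (a + m))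
  refine ⟨n, hn, _, W, hWo, hxW, fun w hw => ?_⟩
  obtain ⟨y, hyt, rfl⟩ := hWsub hw
  have hcyl : ∀ z : G.InfPath, (∀ i < m, z.1 i ∈ t i) → G.shift^[a + n] z = G.shift^[a] z :=
    fun z hz => hper z (hmP z hz)
  have hy : ∀ i < m, y.1 i ∈ t i := fun i hi => hyt i (by omega)
  exact ⟨G.segment y (a + m + 1) n, G.isCycle_segment_of_shift_iterate_eq hn (hcyl y hy)
    (by omega), G.not_hasEntrance_segment hr hcyl hy (by omega) (by omega), rfl⟩

end TopGraph

theorem stmt8_general {V E : Type} [TopologicalSpace V] [TopologicalSpace E]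
    [T2Space V] [T2Space E] [LocallyCompactSpace E]
    [SecondCountableTopology E]
    (G : TopGraph V E)
    (hsg : G.sg = ∅) :
    List.TFAE [G.TopologicallyFree,
      ∀ (n : ℕ) (hn : 0 < n), G.B n hn = ∅,
      ∀ (n : ℕ) (hn : 0 < n), G.Vset n hn = ∅,
      G.EssentiallyFree] := by
  tfae_have 1 → 3 := fun h n hn => Set.subset_eq_empty (G.Vset_subset_interior n hn) h
  tfae_have 2 → 3 := fun h n hn => by simpa [h n hn] using G.Vset_subset_image_B hn
  tfae_have 3 → 4 := fun h => by_contra fun hne =>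
    have ⟨n, hn, hV⟩ := G.exists_Vset_nonempty_of_not_essentiallyFree (G.r_surjective hsg) hne
    hV.ne_empty (h n hn)
  tfae_have 4 → 1 := G.topologicallyFree_of_essentiallyFree
  tfae_have 4 → 2 := fun h n hn =>
    Set.eq_empty_of_forall_notMem fun _ hμ => G.not_essentiallyFree_of_mem_B hn hμ h
  tfae_finish

/-- Corollary 3.10: for a topological graph without singular vertices, the following are
equivalent: topological freeness; `B^n = ∅` for all `n`; `V_n = ∅` for all `n`;
essential freeness of `Γ(E^∞,σ)`. -/
theorem stmt8 {V E : Type} [TopologicalSpace V] [TopologicalSpace E]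
    [T2Space V] [T2Space E] [LocallyCompactSpace V] [LocallyCompactSpace E]
    [SecondCountableTopology V] [SecondCountableTopology E]
    (G : TopGraph V E)
    (hsg : G.sg = ∅) :
    List.TFAE [G.TopologicallyFree,
      ∀ (n : ℕ) (hn : 0 < n), G.B n hn = ∅,
      ∀ (n : ℕ) (hn : 0 < n), G.Vset n hn = ∅,
      G.EssentiallyFree] :=
  stmt8_general G hsg
end

section
/- Let k ≥ 1 and let Λ be a row-finite k-graph without sources. Then Iso(G_Λ)° = {(x,p−q,x) ∈ G_Λ : p,q ∈ ℕ^k, σ^p(x) = σ^q(x), and (x(p),x(q)) is a cycline pair}. -/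
/-- A `k`-graph: a small category `Λ` (morphisms in `Hom a b` have range `a` and
source `b`, composed path-wise) with a degree functor `d : Λ → ℕ^k` satisfying the
factorization property. -/
structure KGraph (k : ℕ) where
  Obj : Type
  Hom : Obj → Obj → Type
  id : ∀ a : Obj, Hom a a
  comp : ∀ {a b c : Obj}, Hom a b → Hom b c → Hom a c
  id_comp : ∀ {a b : Obj} (f : Hom a b), comp (id a) f = f
  comp_id : ∀ {a b : Obj} (f : Hom a b), comp f (id b) = f
  assoc : ∀ {a b c e : Obj} (f : Hom a b) (g : Hom b c) (h : Hom c e),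
    comp (comp f g) h = comp f (comp g h)
  d : ∀ {a b : Obj}, Hom a b → (Fin k → ℕ)
  d_id : ∀ a : Obj, d (id a) = 0
  d_comp : ∀ {a b c : Obj} (f : Hom a b) (g : Hom b c), d (comp f g) = d f + d g
  factor : ∀ {a b : Obj} (f : Hom a b) (m n : Fin k → ℕ), d f = m + n →
    ∃! t : Σ c : Obj, Hom a c × Hom c b,
      d t.2.1 = m ∧ d t.2.2 = n ∧ comp t.2.1 t.2.2 = f

namespace KGraph

variable {k : ℕ} (Λ : KGraph k)

/-- `Λ` is row-finite: `vΛ^n` is finite for every vertex `v` and degree `n`. -/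
def RowFinite : Prop :=
  ∀ (v : Λ.Obj) (n : Fin k → ℕ), Finite {t : Σ w : Λ.Obj, Λ.Hom v w // Λ.d t.2 = n}

/-- `Λ` has no sources: `vΛ^n ≠ ∅` for every vertex `v` and degree `n`. -/
def NoSources : Prop :=
  ∀ (v : Λ.Obj) (n : Fin k → ℕ), ∃ (w : Λ.Obj) (μ : Λ.Hom v w), Λ.d μ = n

/-- An infinite path of `Λ`: a degree-preserving functor from `Ω_k` to `Λ`. -/
structure InfPath where
  vert : (Fin k → ℕ) → Λ.Obj
  seg : ∀ p q : Fin k → ℕ, p ≤ q → Λ.Hom (vert p) (vert q)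
  seg_id : ∀ p : Fin k → ℕ, seg p p le_rfl = Λ.id (vert p)
  seg_comp : ∀ (p q r : Fin k → ℕ) (h1 : p ≤ q) (h2 : q ≤ r),
    Λ.comp (seg p q h1) (seg q r h2) = seg p r (le_trans h1 h2)
  seg_deg : ∀ (p q : Fin k → ℕ) (h : p ≤ q), Λ.d (seg p q h) = q - p

/-- The shift `σ^p` on infinite paths. -/
def shift (p : Fin k → ℕ) (x : Λ.InfPath) : Λ.InfPath where
  vert q := x.vert (p + q)
  seg q q' h := x.seg (p + q) (p + q') (add_le_add_right h p)
  seg_id q := x.seg_id (p + q)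
  seg_comp q q' q'' h1 h2 := x.seg_comp (p + q) (p + q') (p + q'') _ _
  seg_deg q q' h := by
    rw [x.seg_deg]
    funext i
    simp only [Pi.sub_apply, Pi.add_apply]
    omega

/-- `y = μ x` : the infinite path `y` is the concatenation of the finite path `μ`
with the infinite path `x`. -/
def IsPrepend {a b : Λ.Obj} (μ : Λ.Hom a b) (x y : Λ.InfPath) : Prop :=
  x.vert 0 = b ∧ y.vert 0 = a ∧ Λ.shift (Λ.d μ) y = x ∧
    HEq (y.seg 0 (Λ.d μ) (fun _ => Nat.zero_le _)) μ

/-- `(μ, ν)` is a cycline pair: `s(μ) = s(ν)` and `μ x = ν x` for every infinite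
path `x` with `x(0) = s(μ)`. -/
def Cycline {a v b w : Λ.Obj} (μ : Λ.Hom a v) (ν : Λ.Hom b w) : Prop :=
  v = w ∧ ∀ x y z : Λ.InfPath, Λ.IsPrepend μ x y → Λ.IsPrepend ν x z → y = z

/-- The cylinder set `Z(μ) ⊆ Λ^∞`. -/
def cylZ {a b : Λ.Obj} (μ : Λ.Hom a b) : Set Λ.InfPath :=
  {y | HEq (y.seg 0 (Λ.d μ) (fun _ => Nat.zero_le _)) μ}

/-- The topology on `Λ^∞` generated by the cylinder sets `Z(μ)`. -/
instance : TopologicalSpace Λ.InfPath :=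
  TopologicalSpace.generateFrom
    {S | ∃ (a b : Λ.Obj) (μ : Λ.Hom a b), S = Λ.cylZ μ}

/-- The path groupoid `G_Λ` as a set. -/
def PathGroupoid : Type :=
  {g : Λ.InfPath × (Fin k → ℤ) × Λ.InfPath //
    ∃ p q : Fin k → ℕ, (∀ i, g.2.1 i = (p i : ℤ) - (q i : ℤ)) ∧
      Λ.shift p g.1 = Λ.shift q g.2.2}

/-- The basic set `Z(μ, ν) ⊆ G_Λ` for `μ, ν` with common source. -/
def ZZ {a b v : Λ.Obj} (μ : Λ.Hom a v) (ν : Λ.Hom b v) : Set Λ.PathGroupoid :=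
  {g | ∃ x : Λ.InfPath, Λ.IsPrepend μ x g.1.1 ∧ Λ.IsPrepend ν x g.1.2.2 ∧
    ∀ i, g.1.2.1 i = (Λ.d μ i : ℤ) - (Λ.d ν i : ℤ)}

/-- The topology on `G_Λ` generated by the sets `Z(μ, ν)`. -/
instance : TopologicalSpace Λ.PathGroupoid :=
  TopologicalSpace.generateFrom
    {S | ∃ (a b v : Λ.Obj) (μ : Λ.Hom a v) (ν : Λ.Hom b v), S = Λ.ZZ μ ν}

/-- The isotropy group bundle `Iso(G_Λ)`. -/
def isoSet : Set Λ.PathGroupoid := {g | g.1.1 = g.1.2.2}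

/-- The set `Λ^∞_{p,q}` of Notation 4.4. -/
def LambdaPQ (p q : Fin k → ℕ) : Set Λ.InfPath :=
  {x | Λ.shift p x = Λ.shift q x ∧
    ∀ m : Fin k → ℕ,
      ¬ Λ.Cycline (x.seg 0 (p + m) (fun _ => Nat.zero_le _))
          (x.seg 0 (q + m) (fun _ => Nat.zero_le _)) ∧
      ∃ (c : Λ.Obj) (μ : Λ.Hom (x.vert (p + m)) c) (ν : Λ.Hom (x.vert (q + m)) c),
        HEq μ ν ∧
        Λ.Cycline (Λ.comp (x.seg 0 (p + m) (fun _ => Nat.zero_le _)) μ)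
          (Λ.comp (x.seg 0 (q + m) (fun _ => Nat.zero_le _)) ν)}

end KGraph

/-!
Around `g = (x, n, y)` in `G_Λ`, the sets `Z(x(0,p), y(0,q))` with `n = p - q` and
`σ^p x = σ^q y` form a neighbourhood basis: each is open and contains `g`, each subbasic
`Z(μ, ν) ∋ g` is of this form with `(p, q) = (d μ, d ν)`, and the family is directed because
enlarging `(p, q)` to `(p + r, q + r)` shrinks the set. So `g` is interior to `Iso(G_Λ)` exactly
when one of these sets consists of isotropy, which says that `(x(0,p), y(0,q))` is a cycline
pair; and a cycline pair forces `x = x(0,p) σ^p x = y(0,q) σ^q y = y`.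
-/

open Filter Topology

namespace KGraph

variable {k : ℕ} {Λ : KGraph k}

theorem comp_heq {a a' b b' c c' : Λ.Obj} (ha : a = a') (hb : b = b') (hc : c = c')
    {μ : Λ.Hom a b} {μ' : Λ.Hom a' b'} {ν : Λ.Hom b c} {ν' : Λ.Hom b' c'}
    (hμ : HEq μ μ') (hν : HEq ν ν') : HEq (Λ.comp μ ν) (Λ.comp μ' ν') := by
  subst ha hb hc
  rw [eq_of_heq hμ, eq_of_heq hν]

theorem factor_heq {a a' b b' c c' : Λ.Obj} (ha : a = a') (hb : b = b')
    {μ : Λ.Hom a c} {ν : Λ.Hom c b} {μ' : Λ.Hom a' c'} {ν' : Λ.Hom c' b'}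
    (hd : Λ.d μ = Λ.d μ') (h : HEq (Λ.comp μ ν) (Λ.comp μ' ν')) :
    c = c' ∧ HEq μ μ' ∧ HEq ν ν' := by
  subst ha hb
  have h := eq_of_heq h
  have hd' : Λ.d ν = Λ.d ν' := by
    have hsum := congrArg Λ.d h
    rw [Λ.d_comp, Λ.d_comp, hd] at hsum
    exact add_left_cancel hsum
  obtain ⟨t, -, ht⟩ := Λ.factor (Λ.comp μ ν) (Λ.d μ) (Λ.d ν) (Λ.d_comp μ ν)
  have h₁ := ht ⟨c, μ, ν⟩ ⟨rfl, rfl, rfl⟩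
  have h₂ := ht ⟨c', μ', ν'⟩ ⟨hd.symm, hd'.symm, h.symm⟩
  obtain ⟨rfl, hμν⟩ := Sigma.mk.inj_iff.mp (h₁.trans h₂.symm)
  obtain ⟨rfl, rfl⟩ := Prod.mk.inj (eq_of_heq hμν)
  exact ⟨rfl, HEq.rfl, HEq.rfl⟩

namespace InfPath

theorem ext_heq {x y : Λ.InfPath} (hv : x.vert = y.vert)
    (hs : ∀ p q (h : p ≤ q), HEq (x.seg p q h) (y.seg p q h)) : x = y := by
  obtain ⟨v, s, _, _, _⟩ := x
  obtain ⟨v', s', _, _, _⟩ := y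
  obtain rfl : v = v' := hv
  obtain rfl : s = s' := funext fun p => funext fun q => funext fun h => eq_of_heq (hs p q h)
  rfl

theorem seg_heq_seg (x : Λ.InfPath) {p p' q q' : Fin k → ℕ} (hp : p = p') (hq : q = q')
    (h : p ≤ q) (h' : p' ≤ q') : HEq (x.seg p q h) (x.seg p' q' h') := by
  subst hp hq
  rfl

@[simp]
theorem d_seg_zero (x : Λ.InfPath) (p : Fin k → ℕ) (h : 0 ≤ p) : Λ.d (x.seg 0 p h) = p := by
  rw [x.seg_deg, tsub_zero]

theorem seg_heq_of_le {x y : Λ.InfPath} {p q : Fin k → ℕ} (hpq : p ≤ q)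
    (h0 : x.vert 0 = y.vert 0) (hq : x.vert q = y.vert q)
    (hs : HEq (x.seg 0 q zero_le) (y.seg 0 q zero_le)) :
    x.vert p = y.vert p ∧ HEq (x.seg 0 p zero_le) (y.seg 0 p zero_le) ∧
      HEq (x.seg p q hpq) (y.seg p q hpq) :=
  factor_heq h0 hq (by simp) (by rw [x.seg_comp, y.seg_comp]; exact hs)

theorem eq_of_seg_add_heq {x y : Λ.InfPath} (m : Fin k → ℕ) (h0 : x.vert 0 = y.vert 0)
    (h : ∀ r, x.vert (m + r) = y.vert (m + r) ∧
      HEq (x.seg 0 (m + r) zero_le) (y.seg 0 (m + r) zero_le)) : x = y := by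
  have key : ∀ s t (hst : s ≤ t), x.vert t = y.vert t ∧ HEq (x.seg s t hst) (y.seg s t hst) := by
    intro s t hst
    obtain ⟨hv, hs⟩ := h t
    obtain ⟨hvt, hst', -⟩ := seg_heq_of_le le_add_self h0 hv hs
    exact ⟨hvt, (seg_heq_of_le hst h0 hvt hst').2.2⟩
  exact ext_heq (funext fun N => (key N N le_rfl).1) fun s t hst => (key s t hst).2

end InfPath

theorem shift_shift (p q : Fin k → ℕ) (x : Λ.InfPath) :
    Λ.shift q (Λ.shift p x) = Λ.shift (p + q) x :=
  InfPath.ext_heq (funext fun n => congrArg x.vert (add_assoc p q n).symm) fun a b _ =>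
    x.seg_heq_seg (add_assoc p q a).symm (add_assoc p q b).symm _ _

theorem vert_add_eq_of_shift_eq {x y : Λ.InfPath} {p q : Fin k → ℕ}
    (h : Λ.shift p x = Λ.shift q y) (r : Fin k → ℕ) : x.vert (p + r) = y.vert (q + r) :=
  congrArg (fun u => u.vert r) h

theorem seg_add_heq_of_shift_eq {x y : Λ.InfPath} {p q : Fin k → ℕ}
    (h : Λ.shift p x = Λ.shift q y) (r : Fin k → ℕ) :
    HEq (x.seg p (p + r) le_self_add) (y.seg q (q + r) le_self_add) := by
  have hr : HEq ((Λ.shift p x).seg 0 r zero_le) ((Λ.shift q y).seg 0 r zero_le) := by rw [h]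
  exact (x.seg_heq_seg (add_zero p).symm rfl _ _).trans
    (hr.trans (y.seg_heq_seg (add_zero q) rfl _ _))

theorem isPrepend_congr {a a' b b' : Λ.Obj} (ha : a = a') (hb : b = b')
    {μ : Λ.Hom a b} {μ' : Λ.Hom a' b'} (h : HEq μ μ') {x y : Λ.InfPath} :
    Λ.IsPrepend μ x y ↔ Λ.IsPrepend μ' x y := by
  subst ha hb
  rw [eq_of_heq h]

theorem isPrepend_seg_shift (x : Λ.InfPath) (p : Fin k → ℕ) :
    Λ.IsPrepend (x.seg 0 p zero_le) (Λ.shift p x) x :=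
  ⟨rfl, rfl, by rw [InfPath.d_seg_zero], x.seg_heq_seg rfl (InfPath.d_seg_zero ..) _ _⟩

namespace IsPrepend

variable {a b : Λ.Obj} {μ : Λ.Hom a b} {x y : Λ.InfPath}

theorem vert_d (h : Λ.IsPrepend μ x y) : y.vert (Λ.d μ) = b :=
  (congrArg (fun u => u.vert 0) h.2.2.1).trans h.1

theorem unique {y' : Λ.InfPath} (h : Λ.IsPrepend μ x y) (h' : Λ.IsPrepend μ x y') :
    y = y' := by
  have hσ : Λ.shift (Λ.d μ) y = Λ.shift (Λ.d μ) y' := h.2.2.1.trans h'.2.2.1.symm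
  refine InfPath.eq_of_seg_add_heq (Λ.d μ) (h.2.1.trans h'.2.1.symm) fun r =>
    ⟨vert_add_eq_of_shift_eq hσ r, ?_⟩
  rw [← y.seg_comp 0 (Λ.d μ) _ zero_le le_self_add,
    ← y'.seg_comp 0 (Λ.d μ) _ zero_le le_self_add]
  exact comp_heq (h.2.1.trans h'.2.1.symm) (h.vert_d.trans h'.vert_d.symm)
    (vert_add_eq_of_shift_eq hσ r) (h.2.2.2.trans h'.2.2.2.symm) (seg_add_heq_of_shift_eq hσ r)

theorem exists_of_comp {c : Λ.Obj} {μ : Λ.Hom a c} {ν : Λ.Hom c b}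
    (h : Λ.IsPrepend (Λ.comp μ ν) x y) :
    ∃ x', Λ.IsPrepend μ x' y ∧ Λ.IsPrepend ν x x' := by
  have hd : Λ.d (Λ.comp μ ν) = Λ.d μ + Λ.d ν := Λ.d_comp μ ν
  have hb : y.vert (Λ.d μ + Λ.d ν) = b := hd ▸ h.vert_d
  obtain ⟨hx, hy, hσ, hs⟩ := h
  obtain ⟨hc, hμ, hν⟩ := factor_heq hy hb (by simp) <|
    (heq_of_eq (y.seg_comp 0 (Λ.d μ) _ zero_le le_self_add)).trans
      ((y.seg_heq_seg rfl hd.symm _ _).trans hs)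
  refine ⟨Λ.shift (Λ.d μ) y, ⟨hc, hy, rfl, hμ⟩, ⟨hx, hc, ?_, ?_⟩⟩
  · rw [shift_shift, ← hd, hσ]
  · exact (y.seg_heq_seg (add_zero _) rfl _ _).trans hν

end IsPrepend

/-- `Z(μ, ν)` without the requirement `s(μ) = s(ν)`: for the pairs `(x(0,p), y(0,q))` used
below that equality holds only propositionally. -/
def cylPair {a v b w : Λ.Obj} (μ : Λ.Hom a v) (ν : Λ.Hom b w) : Set Λ.PathGroupoid :=
  {g | ∃ z, Λ.IsPrepend μ z g.1.1 ∧ Λ.IsPrepend ν z g.1.2.2 ∧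
    ∀ i, g.1.2.1 i = (Λ.d μ i : ℤ) - (Λ.d ν i : ℤ)}

section cylPair

variable {a v b w : Λ.Obj} {μ : Λ.Hom a v} {ν : Λ.Hom b w}

theorem cylPair_congr {a' v' b' w' : Λ.Obj} {μ' : Λ.Hom a' v'} {ν' : Λ.Hom b' w'}
    (ha : a = a') (hv : v = v') (hb : b = b') (hw : w = w') (hμ : HEq μ μ') (hν : HEq ν ν') :
    cylPair μ ν = cylPair μ' ν' := by
  subst ha hv hb hw
  rw [eq_of_heq hμ, eq_of_heq hν]

theorem isOpen_cylPair (h : v = w) : IsOpen (cylPair μ ν) := by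
  subst h
  exact TopologicalSpace.isOpen_generateFrom_of_mem ⟨a, b, v, μ, ν, rfl⟩

theorem cylPair_subset_isoSet_iff (h : v = w) : cylPair μ ν ⊆ Λ.isoSet ↔ Λ.Cycline μ ν := by
  refine ⟨fun hsub => ⟨h, fun z y y' hy hy' => ?_⟩, fun hc g ⟨z, hy, hy', _⟩ => hc.2 z _ _ hy hy'⟩
  exact @hsub ⟨(y, fun i => (Λ.d μ i : ℤ) - Λ.d ν i, y'), Λ.d μ, Λ.d ν, fun _ => rfl,
    hy.2.2.1.trans hy'.2.2.1.symm⟩ ⟨z, hy, hy', fun _ => rfl⟩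

end cylPair

theorem cylPair_add_subset {x y : Λ.InfPath} {p q : Fin k → ℕ}
    (h : Λ.shift p x = Λ.shift q y) (r : Fin k → ℕ) :
    cylPair (x.seg 0 (p + r) zero_le) (y.seg 0 (q + r) zero_le) ⊆
      cylPair (x.seg 0 p zero_le) (y.seg 0 q zero_le) := by
  rintro g ⟨z, hx, hy, hn⟩
  rw [← x.seg_comp 0 p _ zero_le le_self_add] at hx
  rw [← y.seg_comp 0 q _ zero_le le_self_add] at hy
  obtain ⟨z₁, hx₁, hz₁⟩ := hx.exists_of_comp
  obtain ⟨z₂, hy₂, hz₂⟩ := hy.exists_of_comp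
  obtain rfl : z₁ = z₂ := hz₁.unique <| (isPrepend_congr (vert_add_eq_of_shift_eq h 0).symm
    (vert_add_eq_of_shift_eq h r).symm (seg_add_heq_of_shift_eq h r).symm).mp hz₂
  refine ⟨z₁, hx₁, hy₂, fun i => ?_⟩
  simp only [InfPath.d_seg_zero, Pi.add_apply, Nat.cast_add] at hn ⊢
  rw [hn i]
  ring

namespace PathGroupoid

/-- `g = (x, p - q, y)` with `σ^p x = σ^q y`. -/
def IsRealizedBy (g : Λ.PathGroupoid) (p q : Fin k → ℕ) : Prop :=
  (∀ i, g.1.2.1 i = (p i : ℤ) - (q i : ℤ)) ∧ Λ.shift p g.1.1 = Λ.shift q g.1.2.2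

/-- `Z(x(0,p), y(0,q))` for `g = (x, n, y)`. -/
def basicNhd (g : Λ.PathGroupoid) (p q : Fin k → ℕ) : Set Λ.PathGroupoid :=
  cylPair (g.1.1.seg 0 p zero_le) (g.1.2.2.seg 0 q zero_le)

variable {g : Λ.PathGroupoid} {p q : Fin k → ℕ}

theorem IsRealizedBy.add (h : g.IsRealizedBy p q) (r : Fin k → ℕ) :
    g.IsRealizedBy (p + r) (q + r) :=
  ⟨fun i => by simp only [h.1 i, Pi.add_apply, Nat.cast_add]; ring,
    by rw [← shift_shift, ← shift_shift, h.2]⟩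

variable (g)

theorem mem_basicNhd (h : g.IsRealizedBy p q) : g ∈ g.basicNhd p q :=
  ⟨Λ.shift p g.1.1, isPrepend_seg_shift _ p, h.2 ▸ isPrepend_seg_shift _ q, by simpa using h.1⟩

theorem isOpen_basicNhd (h : g.IsRealizedBy p q) : IsOpen (g.basicNhd p q) :=
  isOpen_cylPair (vert_add_eq_of_shift_eq h.2 0)

theorem basicNhd_eq_ZZ {a b v : Λ.Obj} {μ : Λ.Hom a v} {ν : Λ.Hom b v} (hg : g ∈ Λ.ZZ μ ν) :
    g.IsRealizedBy (Λ.d μ) (Λ.d ν) ∧ g.basicNhd (Λ.d μ) (Λ.d ν) = Λ.ZZ μ ν := by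
  obtain ⟨z, hx, hy, hn⟩ := hg
  exact ⟨⟨hn, hx.2.2.1.trans hy.2.2.1.symm⟩,
    cylPair_congr hx.2.1 hx.vert_d hy.2.1 hy.vert_d hx.2.2.2 hy.2.2.2⟩

theorem directedOn_basicNhd :
    DirectedOn ((fun pq => g.basicNhd pq.1 pq.2) ⁻¹'o (· ⊇ ·))
      {pq : (Fin k → ℕ) × (Fin k → ℕ) | g.IsRealizedBy pq.1 pq.2} := by
  rintro ⟨p₁, q₁⟩ h₁ ⟨p₂, q₂⟩ h₂
  have hq : q₁ + p₂ = q₂ + p₁ := funext fun i => by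
    have h₁i : g.1.2.1 i = p₁ i - q₁ i := h₁.1 i
    have h₂i : g.1.2.1 i = p₂ i - q₂ i := h₂.1 i
    simp only [Pi.add_apply]
    omega
  refine ⟨(p₁ + p₂, q₁ + p₂), h₁.add p₂, cylPair_add_subset h₁.2 p₂, ?_⟩
  change g.basicNhd (p₁ + p₂) (q₁ + p₂) ⊆ g.basicNhd p₂ q₂
  rw [hq, add_comm p₁ p₂]
  exact cylPair_add_subset h₂.2 p₁

theorem nhds_eq_biInf : 𝓝 g = ⨅ pq ∈ {pq : (Fin k → ℕ) × (Fin k → ℕ) |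
    g.IsRealizedBy pq.1 pq.2}, 𝓟 (g.basicNhd pq.1 pq.2) := by
  refine le_antisymm (le_iInf₂ fun pq h =>
    le_principal_iff.2 ((g.isOpen_basicNhd h).mem_nhds (g.mem_basicNhd h))) ?_
  rw [TopologicalSpace.nhds_generateFrom]
  refine le_iInf₂ fun s ⟨hgs, a, b, v, μ, ν, hs⟩ => ?_
  subst hs
  obtain ⟨h, hZ⟩ := g.basicNhd_eq_ZZ hgs
  exact iInf₂_le_of_le (Λ.d μ, Λ.d ν) h (hZ ▸ le_rfl)

theorem nhds_hasBasis : (𝓝 g).HasBasis (fun pq : (Fin k → ℕ) × (Fin k → ℕ) =>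
    g.IsRealizedBy pq.1 pq.2) (fun pq => g.basicNhd pq.1 pq.2) := by
  obtain ⟨p, q, h⟩ := g.2
  rw [nhds_eq_biInf]
  exact hasBasis_biInf_principal g.directedOn_basicNhd ⟨(p, q), h⟩

end PathGroupoid

end KGraph

open KGraph in
theorem stmt11_general {k : ℕ} (Λ : KGraph k) :
    interior Λ.isoSet =
      {g : Λ.PathGroupoid | g.1.1 = g.1.2.2 ∧
        ∃ p q : Fin k → ℕ,
          (∀ i, g.1.2.1 i = (p i : ℤ) - (q i : ℤ)) ∧
          Λ.shift p g.1.1 = Λ.shift q g.1.1 ∧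
          Λ.Cycline (g.1.1.seg 0 p (fun _ => Nat.zero_le _))
            (g.1.1.seg 0 q (fun _ => Nat.zero_le _))} := by
  ext g
  rw [mem_interior_iff_mem_nhds, (PathGroupoid.nhds_hasBasis g).mem_iff]
  obtain ⟨⟨x, n, y⟩, hg⟩ := g
  constructor
  · rintro ⟨⟨p, q⟩, ⟨hn, hσ⟩, hsub⟩
    have hc := (cylPair_subset_isoSet_iff (vert_add_eq_of_shift_eq hσ 0)).1 hsub
    obtain rfl : x = y :=
      hc.2 _ _ _ (isPrepend_seg_shift x p) (hσ ▸ isPrepend_seg_shift y q)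
    exact ⟨rfl, p, q, hn, hσ, hc⟩
  · rintro ⟨hxy, p, q, hn, hσ, hc⟩
    obtain rfl : x = y := hxy
    exact ⟨(p, q), ⟨hn, hσ⟩, (cylPair_subset_isoSet_iff hc.1).2 hc⟩

/-- Lemma 4.2: the interior of `Iso(G_Λ)` consists exactly of the elements
`(x, p - q, x)` with `σ^p(x) = σ^q(x)` and `(x(p), x(q))` a cycline pair. -/
theorem stmt11 {k : ℕ} (hk : 1 ≤ k) (Λ : KGraph k)
    [Countable Λ.Obj] [Countable (Σ a b : Λ.Obj, Λ.Hom a b)]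
    (hrow : Λ.RowFinite) (hns : Λ.NoSources) :
    interior Λ.isoSet =
      {g : Λ.PathGroupoid | g.1.1 = g.1.2.2 ∧
        ∃ p q : Fin k → ℕ,
          (∀ i, g.1.2.1 i = (p i : ℤ) - (q i : ℤ)) ∧
          Λ.shift p g.1.1 = Λ.shift q g.1.1 ∧
          Λ.Cycline (g.1.1.seg 0 p (fun _ => Nat.zero_le _))
            (g.1.1.seg 0 q (fun _ => Nat.zero_le _))} :=
  stmt11_general Λ
end

section
/- Let E be a row-finite directed graph without sources and let α,β be finite paths in E with s(α)=s(β) and |α| ≠ |β|. Then Z(α,β) ∩ Iso(Γ(E^∞,σ)) is either empty or a singleton. -/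
namespace DG

variable {V E : Type} (r s : E → V)

/-- The infinite path space `E^∞` of a directed graph. -/
def Inf : Type := {x : ℕ → E // ∀ i : ℕ, s (x i) = r (x (i + 1))}

/-- The one-sided shift on `E^∞`. -/
def shift (x : Inf r s) : Inf r s := ⟨fun i => x.1 (i + 1), fun i => x.2 (i + 1)⟩

/-- A finite path of a directed graph; a path of length `0` is a vertex,
recorded by the (then equal) fields `rng = src`. -/
structure FPath where
  len : ℕ
  edges : Fin len → E
  rng : V
  src : V
  compat : ∀ (i : ℕ) (h : i + 1 < len),
    s (edges ⟨i, Nat.lt_of_succ_lt h⟩) = r (edges ⟨i + 1, h⟩)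
  rng_eq : ∀ h : 0 < len, r (edges ⟨0, h⟩) = rng
  src_eq : ∀ h : 0 < len, s (edges ⟨len - 1, Nat.sub_lt h Nat.one_pos⟩) = src
  rng_src : len = 0 → rng = src

/-- `y = α x` : the infinite path `y` is the concatenation of the finite path `α`
with the infinite path `x` (which must start at `s(α)`). -/
def IsConcat (α : FPath r s) (x y : Inf r s) : Prop :=
  r (x.1 0) = α.src ∧ (∀ i : Fin α.len, y.1 i = α.edges i) ∧
    ∀ i : ℕ, x.1 i = y.1 (i + α.len)

/-- The graph groupoid `Γ(E^∞, σ)` as a set. -/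
def Gam : Type :=
  {g : Inf r s × ℤ × Inf r s //
    ∃ k l : ℕ, g.2.1 = (k : ℤ) - (l : ℤ) ∧ (shift r s)^[k] g.1 = (shift r s)^[l] g.2.2}

/-- The basic set `Z(α, β) ⊆ Γ(E^∞, σ)`. -/
def Z (α β : FPath r s) : Set (Gam r s) :=
  {g | ∃ x : Inf r s, IsConcat r s α x g.1.1 ∧ IsConcat r s β x g.1.2.2 ∧
    g.1.2.1 = (α.len : ℤ) - (β.len : ℤ)}

/-- The topology on `Γ(E^∞, σ)` for which the sets `Z(α, β)`, over finite paths
`α, β` with `s(α) = s(β)`, form a basis. -/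
instance : TopologicalSpace (Gam r s) :=
  TopologicalSpace.generateFrom
    {S | ∃ α β : FPath r s, α.src = β.src ∧ S = Z r s α β}

/-- The isotropy group bundle `Iso(Γ(E^∞, σ))`. -/
def isoSet : Set (Gam r s) := {g | g.1.1 = g.1.2.2}

end DG

private lemma stmt13_aux {V E : Type} (r s : E → V) (α β : DG.FPath r s)
    (hlen : α.len ≠ β.len) (f g : ℕ → E)
    (hf1 : ∀ i : Fin α.len, f i = α.edges i)
    (hf2 : ∀ i : Fin β.len, f i = β.edges i)
    (hf3 : ∀ i : ℕ, f (i + α.len) = f (i + β.len))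
    (hg1 : ∀ i : Fin α.len, g i = α.edges i)
    (hg2 : ∀ i : Fin β.len, g i = β.edges i)
    (hg3 : ∀ i : ℕ, g (i + α.len) = g (i + β.len)) :
    ∀ n, f n = g n := by
  intro n
  induction n using Nat.strong_induction_on with
  | _ n ih =>
    by_cases hα : n < α.len
    · rw [hf1 ⟨n, hα⟩, hg1 ⟨n, hα⟩]
    by_cases hβ : n < β.len
    · rw [hf2 ⟨n, hβ⟩, hg2 ⟨n, hβ⟩]
    push_neg at hα hβ
    rcases lt_or_gt_of_ne hlen with h | h
    · have e1 : n - β.len + β.len = n := Nat.sub_add_cancel hβ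
      have hf := hf3 (n - β.len); rw [e1] at hf
      have hg := hg3 (n - β.len); rw [e1] at hg
      have hlt : n - β.len + α.len < n := by omega
      rw [← hf, ← hg, ih _ hlt]
    · have e1 : n - α.len + α.len = n := Nat.sub_add_cancel hα
      have hf := hf3 (n - α.len); rw [e1] at hf
      have hg := hg3 (n - α.len); rw [e1] at hg
      have hlt : n - α.len + β.len < n := by omega
      rw [hf, hg, ih _ hlt]


/-- Proposition A.1: for finite paths `α, β` with `s(α) = s(β)` and `|α| ≠ |β|`, the set
`Z(α, β) ∩ Iso(Γ(E^∞, σ))` is either empty or a singleton. -/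
theorem stmt13 {V E : Type} [Countable V] [Countable E] (r s : E → V)
    (hrf : ∀ v : V, (r ⁻¹' {v}).Finite) (hns : ∀ v : V, ∃ e : E, r e = v)
    (α β : DG.FPath r s) (hsrc : α.src = β.src) (hlen : α.len ≠ β.len) :
    DG.Z r s α β ∩ DG.isoSet r s = ∅ ∨
      ∃ g : DG.Gam r s, DG.Z r s α β ∩ DG.isoSet r s = {g} := by
  by_cases h : DG.Z r s α β ∩ DG.isoSet r s = ∅
  · left; exact h
  · right
    obtain ⟨g, hg⟩ := Set.nonempty_iff_ne_empty.mpr h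
    refine ⟨g, Set.eq_singleton_iff_unique_mem.mpr ⟨hg, ?_⟩⟩
    intro g' hg'
    obtain ⟨⟨x, hxα, hxβ, hz⟩, hiso⟩ := hg
    obtain ⟨⟨x', hxα', hxβ', hz'⟩, hiso'⟩ := hg'
    have key : ∀ n, g'.1.1.1 n = g.1.1.1 n := by
      apply stmt13_aux r s α β hlen
      · exact fun i => hxα'.2.1 i
      · intro i; have := hxβ'.2.1 i; rwa [← hiso'] at this
      · intro i; rw [← hxα'.2.2 i, hxβ'.2.2 i, ← hiso']
      · exact fun i => hxα.2.1 i
      · intro i; have := hxβ.2.1 i; rwa [← hiso] at this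
      · intro i; rw [← hxα.2.2 i, hxβ.2.2 i, ← hiso]
    have hy : g'.1.1 = g.1.1 := Subtype.ext (funext key)
    have hfst : g'.1 = g.1 := by
      refine Prod.ext hy (Prod.ext ?_ ?_)
      · rw [hz', hz]
      · rw [← hiso', ← hiso, hy]
    exact Subtype.ext hfst
end

section
/- Let E be a row-finite directed graph without sources, let α,β be finite paths with s(α)=s(β) and |α| < |β|, and let x ∈ E^∞ with r(x_1)=s(α) satisfy αx = βx. Then β = αγ where γ is a cycle of length |β| − |α| with base point s(α), and x = γγγ⋯ is the periodic infinite path repeating γ. -/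
/-!
Comparing the two descriptions `y = α x = β x` edge by edge shows that `β` begins with `α`,
that the first `|β| - |α|` edges of `x` are the remaining edges `γ` of `β`, and that `x` is
invariant under the shift by `|β| - |α|`; hence `x = γ γ γ ⋯`. The path `γ` is a cycle because
it starts where `x` starts, namely at `s(α) = s(β)`, and ends at `s(β)`.
-/

namespace DG

variable {V E : Type} {r s : E → V}

def FPath.drop (β : FPath r s) (k : ℕ) (hk : k < β.len) : FPath r s where
  len := β.len - k
  edges j := β.edges ⟨k + j, by omega⟩
  rng := r (β.edges ⟨k, hk⟩)
  src := β.src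
  compat i h := by
    convert β.compat (k + i) (by omega) using 3
    exact Fin.ext (Nat.add_assoc k i 1).symm
  rng_eq _ := rfl
  src_eq h := by
    convert β.src_eq (by omega) using 3
    exact Fin.ext (by dsimp only; omega)
  rng_src h := by omega

namespace IsConcat

variable {α β : FPath r s} {x y : Inf r s}

theorem edges_eq (hα : IsConcat r s α x y) (hβ : IsConcat r s β x y) (hle : α.len ≤ β.len)
    (i : Fin α.len) : β.edges ⟨i, by omega⟩ = α.edges i := by
  rw [← hα.2.1 i, ← hβ.2.1]

theorem apply_eq_edges_add (hα : IsConcat r s α x y) (hβ : IsConcat r s β x y) {i : ℕ}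
    (hi : α.len + i < β.len) : x.1 i = β.edges ⟨α.len + i, hi⟩ := by
  rw [hα.2.2, add_comm, ← hβ.2.1 ⟨α.len + i, hi⟩]

theorem periodic (hα : IsConcat r s α x y) (hβ : IsConcat r s β x y) (hle : α.len ≤ β.len) :
    Function.Periodic x.1 (β.len - α.len) := fun i => by
  rw [hα.2.2, hβ.2.2, Nat.add_assoc, Nat.sub_add_cancel hle]

end IsConcat

end DG

/-- If `|α| < |β|`, `s(α) = s(β)` and `α x = β x`, then `β = α γ` for a cycle `γ` of
length `|β| - |α|` based at `s(α)`, and `x = γ γ γ ⋯`. -/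
theorem stmt14 {V E : Type} (r s : E → V)
    (α β : DG.FPath r s) (hlt : α.len < β.len)
    (x : DG.Inf r s)
    (y : DG.Inf r s) (hax : DG.IsConcat r s α x y) (hbx : DG.IsConcat r s β x y) :
    ∃ γ : DG.FPath r s, ∃ hlen : γ.len = β.len - α.len,
      γ.rng = γ.src ∧ γ.rng = α.src ∧
      (∀ i : Fin α.len, β.edges ⟨(i : ℕ), lt_trans i.2 hlt⟩ = α.edges i) ∧
      (∀ j : Fin γ.len, β.edges ⟨α.len + (j : ℕ), by have := j.2; omega⟩ = γ.edges j) ∧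
      (∀ (m : ℕ) (i : Fin γ.len), x.1 (m * γ.len + (i : ℕ)) = γ.edges i) := by
  have hrng : r (β.edges ⟨α.len, hlt⟩) = r (x.1 0) :=
    congrArg r (hax.apply_eq_edges_add hbx (i := 0) hlt).symm
  refine ⟨β.drop α.len hlt, rfl, hrng.trans hbx.1, hrng.trans hax.1,
    hax.edges_eq hbx hlt.le, fun _ => rfl, fun m i => ?_⟩
  have hshift := (hax.periodic hbx hlt.le).nat_mul m i
  rw [Nat.cast_id] at hshift
  rw [add_comm]
  exact hshift.trans (hax.apply_eq_edges_add hbx (by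
    have : (i : ℕ) < β.len - α.len := i.2
    omega))
end

section
/- Let E be a row-finite directed graph without sources. Then Iso(Γ(E^∞,σ))° is closed in Γ(E^∞,σ). -/
namespace DG

variable {V E : Type} (r s : E → V)

section Aux

lemma shift_iter (x : Inf r s) (k i : ℕ) :
    ((shift r s)^[k] x).1 i = x.1 (i + k) := by
  induction k generalizing x with
  | zero => rfl
  | succ k ih =>
    rw [Function.iterate_succ_apply, ih]
    show x.1 (i + k + 1) = x.1 (i + (k + 1))
    exact congrArg x.1 (by omega)

def pre (x : Inf r s) (n : ℕ) : FPath r s where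
  len := n
  edges := fun i => x.1 i.1
  rng := r (x.1 0)
  src := r (x.1 n)
  compat := fun i _ => x.2 i
  rng_eq := fun _ => rfl
  src_eq := fun h => by
    have h2 := x.2 (n - 1)
    rwa [Nat.sub_add_cancel h] at h2
  rng_src := fun h => by rw [h]

lemma isOpen_Z (α β : FPath r s) (h : α.src = β.src) : IsOpen (Z r s α β) :=
  TopologicalSpace.GenerateOpen.basic _ ⟨α, β, h, rfl⟩

lemma mem_Z {x y : Inf r s} {m : ℤ} {hg : _} (a b : ℕ)
    (hab : ∀ i, x.1 (i + a) = y.1 (i + b)) (hm : m = (a : ℤ) - (b : ℤ)) :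
    (⟨(x, m, y), hg⟩ : Gam r s) ∈ Z r s (pre r s x a) (pre r s y b) := by
  have z0 : ((shift r s)^[a] x).1 0 = x.1 a :=
    (shift_iter r s x a 0).trans (congrArg x.1 (Nat.zero_add a))
  refine ⟨(shift r s)^[a] x,
    ⟨congrArg r z0, fun i => rfl, fun i => shift_iter r s x a i⟩,
    ⟨?_, fun i => rfl, fun i => ?_⟩, hm⟩
  · exact congrArg r (z0.trans ((congrArg x.1 (Nat.zero_add a)).symm.trans
      ((hab 0).trans (congrArg y.1 (Nat.zero_add b)))))
  · exact (shift_iter r s x a i).trans (hab i)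

lemma Z_diag_subset (α : FPath r s) : Z r s α α ⊆ isoSet r s := by
  rintro g ⟨z, c1, c2, _⟩
  have h : ∀ i, g.1.1.1 i = g.1.2.2.1 i := by
    intro i
    by_cases hi : i < α.len
    · rw [c1.2.1 ⟨i, hi⟩, c2.2.1 ⟨i, hi⟩]
    · have e1 := c1.2.2 (i - α.len)
      have e2 := c2.2.2 (i - α.len)
      have hid : i - α.len + α.len = i := by omega
      rw [hid] at e1 e2
      rw [← e1, ← e2]
  exact Subtype.ext (funext h)

lemma periodic_eq {A : Type} {k l : ℕ} (hkl : k ≠ l) {f g : ℕ → A}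
    (hfp : ∀ j, f (j + k) = f (j + l)) (hgp : ∀ j, g (j + k) = g (j + l))
    (hagree : ∀ i, i < k ∨ i < l → f i = g i) : ∀ i, f i = g i := by
  intro i
  induction i using Nat.strong_induction_on with
  | _ i ih =>
    by_cases hik : i < k ∨ i < l
    · exact hagree i hik
    · push_neg at hik
      rcases Nat.lt_or_ge k l with h | h
      · have hj : i - l + l = i := by omega
        calc f i = f (i - l + l) := by rw [hj]
          _ = f (i - l + k) := (hfp _).symm
          _ = g (i - l + k) := ih _ (by omega)
          _ = g (i - l + l) := hgp _
          _ = g i := by rw [hj]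
      · have hlk : l < k := by omega
        have hj : i - k + k = i := by omega
        calc f i = f (i - k + k) := by rw [hj]
          _ = f (i - k + l) := hfp _
          _ = g (i - k + l) := ih _ (by omega)
          _ = g (i - k + k) := (hgp _).symm
          _ = g i := by rw [hj]

lemma Z_iso_eq {x : Inf r s} {k l : ℕ} (hkl : k ≠ l)
    (hper : ∀ i, x.1 (i + k) = x.1 (i + l))
    {h : Gam r s} (hZ : h ∈ Z r s (pre r s x k) (pre r s x l))
    (hIso : h ∈ isoSet r s) :
    h.1.1 = x ∧ h.1.2.1 = (k : ℤ) - l ∧ h.1.2.2 = x := by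
  obtain ⟨z, c1, c2, hn⟩ := hZ
  have hww : h.1.1 = h.1.2.2 := hIso
  have hfp : ∀ j, h.1.1.1 (j + k) = h.1.1.1 (j + l) := by
    intro j
    have e2 := c2.2.2 j
    rw [← hww] at e2
    exact (c1.2.2 j).symm.trans e2
  have hagree : ∀ i, i < k ∨ i < l → h.1.1.1 i = x.1 i := by
    rintro i (hi | hi)
    · exact c1.2.1 ⟨i, hi⟩
    · have := c2.2.1 ⟨i, hi⟩
      rw [← hww] at this
      exact this
  have key : ∀ i, h.1.1.1 i = x.1 i := periodic_eq hkl hfp hper hagree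
  have hx : h.1.1 = x := Subtype.ext (funext key)
  exact ⟨hx, hn, hww.symm.trans hx⟩

end Aux

end DG

/-- Proposition A.2: for a row-finite directed graph without sources,
`Iso(Γ(E^∞, σ))°` is closed. -/
theorem stmt15 {V E : Type} [Countable V] [Countable E] (r s : E → V)
    (hrf : ∀ v : V, (r ⁻¹' {v}).Finite) (hns : ∀ v : V, ∃ e : E, r e = v) :
    IsClosed (interior (DG.isoSet r s)) := by
  rw [← isOpen_compl_iff, isOpen_iff_forall_mem_open]
  rintro ⟨⟨x, m, y⟩, k, l, hm, hsh⟩ hg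
  have hm2 : m = (k : ℤ) - (l : ℤ) := hm
  have hsh' : ∀ i : ℕ, x.1 (i + k) = y.1 (i + l) := by
    intro i
    have h1 := DG.shift_iter r s x k i
    have h2 := DG.shift_iter r s y l i
    rw [hsh] at h1
    exact h1.symm.trans h2
  by_cases hxy : x = y
  · subst hxy
    by_cases hkl : k = l
    · exfalso
      apply hg
      apply mem_interior.mpr
      refine ⟨DG.Z r s (DG.pre r s x k) (DG.pre r s x k), DG.Z_diag_subset r s _,
        DG.isOpen_Z r s _ _ rfl, ?_⟩
      exact DG.mem_Z r s k k (fun i => rfl) (by rw [hm2, hkl])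
    · refine ⟨DG.Z r s (DG.pre r s x k) (DG.pre r s x l), ?_,
        DG.isOpen_Z r s _ _ (congrArg r (by simpa using hsh' 0)), DG.mem_Z r s k l hsh' hm2⟩
      intro h hU
      simp only [Set.mem_compl_iff]
      intro hInt
      have hIso := interior_subset hInt
      obtain ⟨e1, e2, e3⟩ := DG.Z_iso_eq r s hkl hsh' hU hIso
      have heq : h = ⟨(x, m, x), k, l, hm, hsh⟩ := by
        apply Subtype.ext
        exact Prod.ext e1 (Prod.ext (e2.trans hm2.symm) e3)
      rw [heq] at hInt
      exact hg hInt
  · have hne : ∃ i0, x.1 i0 ≠ y.1 i0 := by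
      by_contra hc
      push_neg at hc
      exact hxy (Subtype.ext (funext hc))
    obtain ⟨i0, hi0⟩ := hne
    have hab : ∀ i, x.1 (i + (k + (i0 + 1))) = y.1 (i + (l + (i0 + 1))) := by
      intro i
      have h0 := hsh' (i + (i0 + 1))
      calc x.1 (i + (k + (i0 + 1)))
          = x.1 (i + (i0 + 1) + k) := congrArg x.1 (by omega)
        _ = y.1 (i + (i0 + 1) + l) := h0
        _ = y.1 (i + (l + (i0 + 1))) := congrArg y.1 (by omega)
    have hm' : m = ((k + (i0 + 1) : ℕ) : ℤ) - ((l + (i0 + 1) : ℕ) : ℤ) := by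
      rw [hm2]; push_cast; ring
    refine ⟨DG.Z r s (DG.pre r s x (k + (i0 + 1))) (DG.pre r s y (l + (i0 + 1))), ?_,
      DG.isOpen_Z r s _ _ (congrArg r (by simpa using hab 0)),
      DG.mem_Z r s _ _ hab hm'⟩
    intro h hU
    simp only [Set.mem_compl_iff]
    intro hInt
    have hIso0 := interior_subset hInt
    have hIso : h.1.1 = h.1.2.2 := hIso0
    obtain ⟨z, c1, c2, _⟩ := hU
    have e1 : h.1.1.1 i0 = x.1 i0 := c1.2.1 ⟨i0, by show i0 < k + (i0 + 1); omega⟩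
    have e2 : h.1.2.2.1 i0 = y.1 i0 := c2.2.1 ⟨i0, by show i0 < l + (i0 + 1); omega⟩
    rw [hIso] at e1
    exact hi0 (e1.symm.trans e2)
end
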